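/- arXiv:1407.4485 — 2 statements merged into one kernel-verified Lean document; each statement's English description precedes it below -/
import Mathlib

section
/- For every n ≥ 2 and any splits S and T of the same 2n points, the split distance satisfies d(S,T) = n − ‖S,T‖. -/
attribute [local instance] Classical.propDecidable

namespace MultiCrossing

/-- `x` lies strictly in the open clockwise arc from `a` to `b` on the circle `ZMod (2*n)`. -/
def StrictBtw (n : ℕ) (a b x : ZMod (2 * n)) : Prop :=
  0 < (x - a).val ∧ (x - a).val < (b - a).val

/-- Two chords (with four distinct endpoints) cross: exactly one of the endpoints of one
chord lies in the open clockwise arc strictly between the endpoints of the other. -/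
def Crosses (n : ℕ) (e f : Finset (ZMod (2 * n))) : Prop :=
  ∃ a b c d : ZMod (2 * n), e = {a, b} ∧ f = {c, d} ∧ a ≠ b ∧ c ≠ d ∧
    Disjoint e f ∧ Xor' (StrictBtw n a b c) (StrictBtw n a b d)

/-- A split: a non-crossing perfect matching of the `2*n` points `ZMod (2*n)`. -/
structure IsSplit (n : ℕ) (S : Finset (Finset (ZMod (2 * n)))) : Prop where
  card_two : ∀ e ∈ S, e.card = 2
  partitions : ∀ x : ZMod (2 * n), ∃! e, e ∈ S ∧ x ∈ e
  noncrossing : ∀ e ∈ S, ∀ f ∈ S, ¬ Crosses n e f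

/-- A split move transforms a split `S` into a different split `S'` sharing exactly
`n - 2` chords with `S`. -/
def SplitMove (n : ℕ) (S S' : Finset (Finset (ZMod (2 * n)))) : Prop :=
  IsSplit n S ∧ IsSplit n S' ∧ S ≠ S' ∧ (S ∩ S').card = n - 2

/-- `ChainLen R k a b` : `b` is reachable from `a` in exactly `k` steps of the relation `R`. -/
def ChainLen {α : Type*} (R : α → α → Prop) : ℕ → α → α → Prop
  | 0, a, b => a = b
  | (k + 1), a, b => ∃ c, R a c ∧ ChainLen R k c b

/-- The split distance: the minimal number of split moves transforming `S` into `T`. -/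
noncomputable def splitDist (n : ℕ) (S T : Finset (Finset (ZMod (2 * n)))) : ℕ :=
  sInf {k | ChainLen (SplitMove n) k S T}

/-- The graph on `ZMod (2*n)` whose edges are the chords of `S` together with those of `T`. -/
def unionGraph (n : ℕ) (S T : Finset (Finset (ZMod (2 * n)))) : SimpleGraph (ZMod (2 * n)) where
  Adj x y := x ≠ y ∧ ∃ e, (e ∈ S ∨ e ∈ T) ∧ x ∈ e ∧ y ∈ e
  symm := by
    constructor
    rintro x y ⟨hxy, e, he, hx, hy⟩
    exact ⟨Ne.symm hxy, e, he, hy, hx⟩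
  loopless := by
    constructor
    rintro x ⟨h, -⟩
    exact h rfl

/-- `‖S,T‖`: the number of connected components (circles) of the multigraph obtained from
the chords of `S` (drawn inside the circle) and the chords of `T` (drawn outside). -/
noncomputable def circleCount (n : ℕ) (S T : Finset (Finset (ZMod (2 * n)))) : ℕ :=
  Nat.card (unionGraph n S T).ConnectedComponent


/-!
Encode a split by the fixed-point-free involution exchanging the ends of its chords. The circles
of `S` and `T` are the connected components of the graph of all chords: there are at most `n` of
them, and `n` when `S = T`. A split move changes their number by at most one, because deleting a
single chord of a split never disconnects its ends. Conversely, when `S ≠ T`, resolving a shortest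
chord of `T` missing from `S` is a split move that adds a circle.
-/

theorem _root_.Finset.pair_eq_pair_iff {α : Type*} [DecidableEq α] {x y z w : α} :
    ({x, y} : Finset α) = {z, w} ↔ x = z ∧ y = w ∨ x = w ∧ y = z := by
  rw [← Finset.coe_inj, Finset.coe_pair, Finset.coe_pair, Set.pair_eq_pair_iff]

theorem _root_.Finset.even_card_of_involution {α : Type*} {s : Finset α} (g : α → α)
    (hg : ∀ x ∈ s, g x ∈ s) (hne : ∀ x ∈ s, g x ≠ x) (hinv : ∀ x ∈ s, g (g x) = x) :
    Even s.card := by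
  have h : ∑ _x ∈ s, (1 : ZMod 2) = 0 :=
    Finset.sum_involution (fun x _ => g x) (fun _ _ => by decide) (fun x hx _ => hne x hx) hg hinv
  rwa [Finset.sum_const, nsmul_one, ZMod.natCast_eq_zero_iff_even] at h

section Components

open SimpleGraph

variable {V : Type*} {G H : SimpleGraph V}

theorem _root_.SimpleGraph.Reachable.mem_of_adj_closed {P : Set V}
    (hP : ∀ u v, u ∈ P → G.Adj u v → v ∈ P) {x y : V} (hx : x ∈ P) (h : G.Reachable x y) :
    y ∈ P := by
  obtain ⟨w⟩ := h
  induction w with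
  | nil => exact hx
  | cons hadj _ ih => exact ih (hP _ _ hx hadj)

theorem _root_.SimpleGraph.Reachable.of_adj_reachable (h : ∀ x y, H.Adj x y → G.Reachable x y)
    {x y : V} (hxy : H.Reachable x y) : G.Reachable x y := by
  obtain ⟨w⟩ := hxy
  induction w with
  | nil => rfl
  | cons hadj _ ih => exact (h _ _ hadj).trans ih

def componentMap (h : ∀ x y, H.Adj x y → G.Reachable x y) :
    H.ConnectedComponent → G.ConnectedComponent :=
  ConnectedComponent.lift G.connectedComponentMk fun _ _ p _ =>
    ConnectedComponent.eq.mpr (p.reachable.of_adj_reachable h)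

theorem componentMap_surjective (h : ∀ x y, H.Adj x y → G.Reachable x y) :
    Function.Surjective (componentMap h) :=
  fun C => C.ind fun x => ⟨H.connectedComponentMk x, rfl⟩

theorem card_connectedComponent_le_of_adj_reachable [Finite V]
    (h : ∀ x y, H.Adj x y → G.Reachable x y) :
    Nat.card G.ConnectedComponent ≤ Nat.card H.ConnectedComponent :=
  Nat.card_le_card_of_surjective _ (componentMap_surjective h)

theorem card_connectedComponent_lt_of_adj_reachable [Finite V]
    (h : ∀ x y, H.Adj x y → G.Reachable x y) {x y : V} (hG : G.Reachable x y)
    (hH : ¬ H.Reachable x y) :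
    Nat.card G.ConnectedComponent < Nat.card H.ConnectedComponent := by
  have : Fintype G.ConnectedComponent := Fintype.ofFinite _
  have : Fintype H.ConnectedComponent := Fintype.ofFinite _
  simp only [Nat.card_eq_fintype_card]
  refine Fintype.card_lt_of_surjective_not_injective _ (componentMap_surjective h) fun hinj => ?_
  exact hH (ConnectedComponent.eq.mp (hinj (ConnectedComponent.sound hG)))

theorem _root_.SimpleGraph.Reachable.deleteEdges_or {a b x y : V} (h : G.Reachable x y) :
    (G.deleteEdges {s(a, b)}).Reachable x y ∨
      ((G.deleteEdges {s(a, b)}).Reachable x a ∨ (G.deleteEdges {s(a, b)}).Reachable x b) ∧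
      ((G.deleteEdges {s(a, b)}).Reachable y a ∨ (G.deleteEdges {s(a, b)}).Reachable y b) := by
  obtain ⟨w⟩ := h
  induction w with
  | nil => exact Or.inl .rfl
  | @cons x z y hadj _ ih =>
    by_cases he : s(x, z) = s(a, b)
    · rcases Sym2.eq_iff.mp he with ⟨rfl, rfl⟩ | ⟨rfl, rfl⟩
      · exact Or.inr ⟨Or.inl .rfl, ih.elim (fun h => Or.inr h.symm) And.right⟩
      · exact Or.inr ⟨Or.inr .rfl, ih.elim (fun h => Or.inl h.symm) And.right⟩
    · have hadj' : (G.deleteEdges {s(a, b)}).Adj x z := by simpa [he] using hadj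
      rcases ih with h | ⟨hz, hy⟩
      · exact Or.inl (hadj'.reachable.trans h)
      · exact Or.inr ⟨hz.imp hadj'.reachable.trans hadj'.reachable.trans, hy⟩

theorem card_connectedComponent_deleteEdges_le [Finite V] (a b : V) :
    Nat.card (G.deleteEdges {s(a, b)}).ConnectedComponent ≤
      Nat.card G.ConnectedComponent + 1 := by
  set G' := G.deleteEdges {s(a, b)}
  have hle : ∀ x y, G'.Adj x y → G.Reachable x y := fun x y h => (deleteEdges_le _ h).reachable
  let F : G'.ConnectedComponent → Option G.ConnectedComponent := fun C =>
    if C = G'.connectedComponentMk b then none else some (componentMap hle C)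
  have hinj : Function.Injective F := by
    intro C D hCD
    induction C using ConnectedComponent.ind with | h x => ?_
    induction D using ConnectedComponent.ind with | h y => ?_
    by_cases hx : G'.connectedComponentMk x = G'.connectedComponentMk b <;>
      by_cases hy : G'.connectedComponentMk y = G'.connectedComponentMk b <;>
      simp only [F, hx, hy, if_true, if_false, reduceCtorEq, Option.some.injEq] at hCD
    · rw [hx, hy]
    rw [ConnectedComponent.eq] at hx hy ⊢
    rcases (ConnectedComponent.eq.mp hCD).deleteEdges_or (a := a) (b := b) with
      h | ⟨hxa | hxb, hya | hyb⟩
    exacts [h, hxa.trans hya.symm, (hy hyb).elim, (hx hxb).elim, (hx hxb).elim]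
  have : Fintype G.ConnectedComponent := Fintype.ofFinite _
  have : Fintype G'.ConnectedComponent := Fintype.ofFinite _
  simpa only [Nat.card_eq_fintype_card, Fintype.card_option] using
    Fintype.card_le_of_injective F hinj

end Components

section Pairing

open SimpleGraph

variable {α : Type*}

def chordGraph (C : Finset (Finset α)) : SimpleGraph α where
  Adj x y := x ≠ y ∧ ∃ e ∈ C, x ∈ e ∧ y ∈ e
  symm := ⟨fun _ _ ⟨hxy, e, he, hx, hy⟩ => ⟨hxy.symm, e, he, hy, hx⟩⟩
  loopless := ⟨fun _ h => h.1 rfl⟩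

theorem chordGraph_mono {C D : Finset (Finset α)} (h : C ⊆ D) : chordGraph C ≤ chordGraph D :=
  fun _ _ ⟨hxy, e, he, hx, hy⟩ => ⟨hxy, e, h he, hx, hy⟩

theorem chordGraph_reachable {C : Finset (Finset α)} {e : Finset α} (he : e ∈ C) {x y : α}
    (hx : x ∈ e) (hy : y ∈ e) : (chordGraph C).Reachable x y := by
  by_cases hxy : x = y
  · exact hxy ▸ .rfl
  · exact Adj.reachable ⟨hxy, e, he, hx, hy⟩

variable [DecidableEq α]

structure IsPairing (S : Finset (Finset α)) (σ : α → α) : Prop where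
  ne : ∀ x, σ x ≠ x
  invol : Function.Involutive σ
  mem : ∀ x, {x, σ x} ∈ S
  exists_eq : ∀ e ∈ S, ∃ x, e = {x, σ x}

theorem exists_isPairing_of_existsUnique {S : Finset (Finset α)} (hcard : ∀ e ∈ S, e.card = 2)
    (hpart : ∀ x, ∃! e, e ∈ S ∧ x ∈ e) : ∃ σ, IsPairing S σ := by
  have partner : ∀ x, ∃ y, y ≠ x ∧ {x, y} ∈ S := by
    intro x
    obtain ⟨e, ⟨he, hxe⟩, -⟩ := hpart x
    obtain ⟨a, b, hab, rfl⟩ := Finset.card_eq_two.mp (hcard e he)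
    rcases Finset.mem_insert.mp hxe with rfl | hx
    · exact ⟨b, hab.symm, he⟩
    · rw [Finset.mem_singleton.mp hx]
      exact ⟨a, hab, by rwa [Finset.pair_comm]⟩
  choose σ hne hmem using partner
  have heq : ∀ e ∈ S, ∀ x ∈ e, e = {x, σ x} := fun e he x hx =>
    (hpart x).unique ⟨he, hx⟩ ⟨hmem x, Finset.mem_insert_self x _⟩
  refine ⟨σ, hne, fun x => ?_, hmem, fun e he => ?_⟩
  · rcases Finset.pair_eq_pair_iff.mp (heq _ (hmem x) (σ x) (by simp)) with ⟨h, -⟩ | ⟨h, -⟩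
    exacts [(hne x h.symm).elim, h.symm]
  · obtain ⟨x, hx⟩ := Finset.card_pos.mp (by rw [hcard e he]; omega)
    exact ⟨x, heq e he x hx⟩

namespace IsPairing

variable {S T : Finset (Finset α)} {σ τ : α → α}

theorem eq_of_mem (hp : IsPairing S σ) {e : Finset α} (he : e ∈ S) {x : α} (hx : x ∈ e) :
    e = {x, σ x} := by
  obtain ⟨y, rfl⟩ := hp.exists_eq e he
  rcases Finset.mem_insert.mp hx with rfl | hx
  · rfl
  · rw [Finset.mem_singleton.mp hx, hp.invol, Finset.pair_comm]

theorem card_eq_two (hp : IsPairing S σ) {e : Finset α} (he : e ∈ S) : e.card = 2 := by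
  obtain ⟨x, rfl⟩ := hp.exists_eq e he
  exact Finset.card_pair (hp.ne x).symm

theorem existsUnique_mem (hp : IsPairing S σ) (x : α) : ∃! e, e ∈ S ∧ x ∈ e :=
  ⟨{x, σ x}, ⟨hp.mem x, Finset.mem_insert_self x _⟩, fun _ ⟨he, hx⟩ => hp.eq_of_mem he hx⟩

theorem pair_mem_iff (hp : IsPairing S σ) {x y : α} (hxy : y ≠ x) : {x, y} ∈ S ↔ σ x = y := by
  refine ⟨fun h => ?_, fun h => h ▸ hp.mem x⟩
  rcases Finset.pair_eq_pair_iff.mp (hp.eq_of_mem h (Finset.mem_insert_self x _)) with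
    ⟨-, h⟩ | ⟨-, h⟩
  exacts [h.symm, (hxy h).elim]

theorem two_mul_card [Fintype α] (hp : IsPairing S σ) : 2 * S.card = Fintype.card α := by
  have hdisj : (S : Set (Finset α)).PairwiseDisjoint id := fun e he f hf hef =>
    Finset.disjoint_left.mpr fun x hxe hxf => hef ((hp.eq_of_mem he hxe).trans
      (hp.eq_of_mem hf hxf).symm)
  have hcover : S.biUnion id = Finset.univ :=
    Finset.eq_univ_of_forall fun x => Finset.mem_biUnion.mpr ⟨_, hp.mem x, by simp⟩
  rw [← Finset.card_univ, ← hcover, Finset.card_biUnion hdisj]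
  simp only [id]
  rw [Finset.sum_congr rfl fun e he => hp.card_eq_two he, Finset.sum_const, smul_eq_mul, mul_comm]

theorem eq_or_eq_of_adj (hp : IsPairing S σ) (hq : IsPairing T τ) {x y : α}
    (h : (chordGraph (S ∪ T)).Adj x y) : σ x = y ∨ τ x = y := by
  obtain ⟨hxy, e, he, hx, hy⟩ := h
  rcases Finset.mem_union.mp he with he | he
  · rw [hp.eq_of_mem he hx] at hy
    exact .inl ((Finset.mem_insert.mp hy).resolve_left hxy.symm |> Finset.mem_singleton.mp).symm
  · rw [hq.eq_of_mem he hx] at hy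
    exact .inr ((Finset.mem_insert.mp hy).resolve_left hxy.symm |> Finset.mem_singleton.mp).symm

theorem reachable_iff (hp : IsPairing S σ) {x y : α} :
    (chordGraph S).Reachable x y ↔ y = x ∨ y = σ x := by
  refine ⟨fun h => ?_, ?_⟩
  · refine h.mem_of_adj_closed (P := {x, σ x}) (fun u v hu huv => ?_) (Set.mem_insert x _)
    have hv : σ u = v := by simpa using hp.eq_or_eq_of_adj hp (by simpa using huv)
    rcases hu with hu | hu <;> rw [hu] at hv
    exacts [.inr hv.symm, .inl (by rw [← hv, hp.invol])]
  · rintro (rfl | rfl)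
    exacts [.rfl, chordGraph_reachable (hp.mem x) (by simp) (by simp)]

end IsPairing

end Pairing

section Circles

open SimpleGraph

variable {α : Type*} [DecidableEq α] [Fintype α] {S S' T : Finset (Finset α)} {σ σ' τ : α → α}

theorem IsPairing.card_components_le (hp : IsPairing S σ) (T : Finset (Finset α)) :
    Nat.card (chordGraph (S ∪ T)).ConnectedComponent ≤ S.card := by
  let g : (chordGraph (S ∪ T)).ConnectedComponent → S := fun C => ⟨{C.out, σ C.out}, hp.mem _⟩
  have hg : Function.Injective g := fun C D hCD => by
    have hD : D.out ∈ ({C.out, σ C.out} : Finset α) := by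
      rw [show ({C.out, σ C.out} : Finset α) = {D.out, σ D.out} from congrArg Subtype.val hCD]
      exact Finset.mem_insert_self _ _
    have hC : (chordGraph (S ∪ T)).connectedComponentMk C.out = C := C.out_eq
    have hD' : (chordGraph (S ∪ T)).connectedComponentMk D.out = D := D.out_eq
    refine hC.symm.trans (Eq.trans ?_ hD')
    exact ConnectedComponent.eq.mpr
      (chordGraph_reachable (Finset.mem_union_left T (hp.mem C.out)) (by simp) hD)
  simpa only [Nat.card_eq_finsetCard] using Nat.card_le_card_of_injective g hg

theorem IsPairing.card_le_card_components (hp : IsPairing S σ) :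
    S.card ≤ Nat.card (chordGraph S).ConnectedComponent := by
  choose x hx using hp.exists_eq
  let g : S → (chordGraph S).ConnectedComponent := fun e =>
    (chordGraph S).connectedComponentMk (x e.1 e.2)
  have hg : Function.Injective g := fun e f hef => by
    rcases hp.reachable_iff.mp (ConnectedComponent.eq.mp hef) with h | h <;>
      apply Subtype.ext <;> rw [hx e.1 e.2, hx f.1 f.2, h]
    rw [Finset.pair_comm, hp.invol]
  simpa only [Nat.card_eq_finsetCard] using Nat.card_le_card_of_injective g hg

/-- Otherwise the points reachable from `a` would form a set closed under `τ` that, with `a`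
removed, is closed under `σ`: two sets of even size differing by one point. -/
theorem IsPairing.reachable_erase (hp : IsPairing S σ) (hq : IsPairing T τ) (a : α) :
    (chordGraph (S.erase {a, σ a} ∪ T)).Reachable a (σ a) := by
  set G := chordGraph (S.erase {a, σ a} ∪ T)
  by_contra hσa
  let C := Finset.univ.filter (G.Reachable a)
  have haC : a ∈ C := by simp [C]
  have hτ : ∀ x ∈ C, τ x ∈ C := fun x hx => by
    have hxτ : G.Reachable x (τ x) :=
      chordGraph_reachable (Finset.mem_union_right _ (hq.mem x)) (by simp) (by simp)
    simpa [C] using ((Finset.mem_filter.mp hx).2.trans hxτ)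
  have hσ : ∀ x ∈ C.erase a, σ x ∈ C.erase a := fun x hx => by
    obtain ⟨hxa, hxC⟩ := Finset.mem_erase.mp hx
    have hxa' : G.Reachable a x := (Finset.mem_filter.mp hxC).2
    have hxσa : x ≠ σ a := fun h => hσa (h ▸ hxa')
    have hne : ({x, σ x} : Finset α) ≠ {a, σ a} := fun h => by
      have : x ∈ ({a, σ a} : Finset α) := h ▸ Finset.mem_insert_self x _
      simp_all
    have hxσx : G.Reachable x (σ x) := chordGraph_reachable
      (Finset.mem_union_left _ (Finset.mem_erase.mpr ⟨hne, hp.mem x⟩)) (by simp) (by simp)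
    refine Finset.mem_erase.mpr ⟨fun h => hxσa ?_, by simpa [C] using hxa'.trans hxσx⟩
    rw [← h, hp.invol]
  have hCeven := Finset.even_card_of_involution τ hτ (fun x _ => hq.ne x) (fun x _ => hq.invol x)
  have hC'even := Finset.even_card_of_involution σ hσ (fun x _ => hp.ne x) (fun x _ => hp.invol x)
  rw [Finset.card_erase_of_mem haC] at hC'even
  have hpos := Finset.card_pos.mpr ⟨a, haC⟩
  rcases hCeven with ⟨k, hk⟩
  rcases hC'even with ⟨l, hl⟩
  omega

theorem IsPairing.card_components_erase (hp : IsPairing S σ) (hq : IsPairing T τ) (a : α) :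
    Nat.card (chordGraph (S.erase {a, σ a} ∪ T)).ConnectedComponent =
      Nat.card (chordGraph (S ∪ T)).ConnectedComponent := by
  refine le_antisymm (card_connectedComponent_le_of_adj_reachable ?_)
    (ConnectedComponent.card_le_card_of_le (chordGraph_mono
      (Finset.union_subset_union (Finset.erase_subset _ _) subset_rfl)))
  rintro x y ⟨hxy, e, he, hx, hy⟩
  by_cases hea : e = {a, σ a} ∧ e ∉ T
  · obtain ⟨rfl, -⟩ := hea
    have h := hp.reachable_erase hq a
    simp only [Finset.mem_insert, Finset.mem_singleton] at hx hy
    rcases hx with rfl | rfl <;> rcases hy with rfl | rfl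
    exacts [.rfl, h, h.symm, .rfl]
  · refine chordGraph_reachable (e := e) ?_ hx hy
    simp only [Finset.mem_union, Finset.mem_erase] at he ⊢
    tauto

theorem card_components_erase_le (A T : Finset (Finset α)) (u v : α) :
    Nat.card (chordGraph (A.erase {u, v} ∪ T)).ConnectedComponent ≤
      Nat.card (chordGraph (A ∪ T)).ConnectedComponent + 1 := by
  refine le_trans (ConnectedComponent.card_le_card_of_le ?_)
    (card_connectedComponent_deleteEdges_le u v)
  rintro x y ⟨⟨hxy, e, he, hx, hy⟩, hne⟩
  refine ⟨hxy, e, ?_, hx, hy⟩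
  rcases Finset.mem_union.mp he with he | he
  · refine Finset.mem_union_left _ (Finset.mem_erase.mpr ⟨?_, he⟩)
    rintro rfl
    simp only [Finset.mem_insert, Finset.mem_singleton] at hx hy
    rcases hx with rfl | rfl <;> rcases hy with rfl | rfl <;> simp_all [Sym2.eq_swap]
  · exact Finset.mem_union_right _ he

theorem IsPairing.card_components_le_succ (hp : IsPairing S σ) (hq : IsPairing T τ)
    {e₁ e₂ : Finset α} (he₁ : e₁ ∈ S) (he₂ : e₂ ∈ S) (h : (S.erase e₁).erase e₂ ⊆ S') :
    Nat.card (chordGraph (S' ∪ T)).ConnectedComponent ≤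
      Nat.card (chordGraph (S ∪ T)).ConnectedComponent + 1 := by
  obtain ⟨x₁, rfl⟩ := hp.exists_eq e₁ he₁
  obtain ⟨x₂, rfl⟩ := hp.exists_eq e₂ he₂
  calc Nat.card (chordGraph (S' ∪ T)).ConnectedComponent
      ≤ Nat.card (chordGraph ((S.erase {x₁, σ x₁}).erase {x₂, σ x₂} ∪ T)).ConnectedComponent :=
        ConnectedComponent.card_le_card_of_le (chordGraph_mono (Finset.union_subset_union h le_rfl))
    _ ≤ Nat.card (chordGraph (S.erase {x₁, σ x₁} ∪ T)).ConnectedComponent + 1 :=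
        card_components_erase_le _ _ _ _
    _ = Nat.card (chordGraph (S ∪ T)).ConnectedComponent + 1 := by
        rw [hp.card_components_erase hq]

theorem IsPairing.exists_pair_notMem (hp : IsPairing S σ) (hq : IsPairing T τ) (h : S ≠ T) :
    ∃ x, {x, τ x} ∉ S := by
  by_contra! hall
  refine h (Finset.eq_of_subset_of_card_le (fun e he => ?_) ?_).symm
  · obtain ⟨x, rfl⟩ := hq.exists_eq e he
    exact hall x
  · have := hp.two_mul_card
    have := hq.two_mul_card
    omega

theorem IsPairing.card_components_lt (hp : IsPairing S σ) (hq : IsPairing T τ)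
    (hp' : IsPairing S' σ') {b : α} (hb : σ' b = τ b) (hσb : σ b ≠ τ b)
    (hreach : ∀ e ∈ S', ∀ x ∈ e, ∀ y ∈ e, (chordGraph (S ∪ T)).Reachable x y) :
    Nat.card (chordGraph (S ∪ T)).ConnectedComponent <
      Nat.card (chordGraph (S' ∪ T)).ConnectedComponent := by
  refine card_connectedComponent_lt_of_adj_reachable (x := b) (y := σ b) ?_
    (chordGraph_reachable (Finset.mem_union_left T (hp.mem b)) (by simp) (by simp)) fun h => ?_
  · rintro x y ⟨-, e, he, hx, hy⟩
    rcases Finset.mem_union.mp he with he | he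
    exacts [hreach e he x hx y hy, chordGraph_reachable (Finset.mem_union_right S he) hx hy]
  · have hclosed : ∀ u v, u ∈ ({b, τ b} : Set α) → (chordGraph (S' ∪ T)).Adj u v →
        v ∈ ({b, τ b} : Set α) := by
      rintro u v hu huv
      rcases hu with hu | hu <;> rw [hu] at huv <;>
        rcases hp'.eq_or_eq_of_adj hq huv with rfl | rfl
      · exact .inr hb
      · exact .inr rfl
      · exact .inl (by rw [← hb, hp'.invol])
      · exact .inl (hq.invol b)
    rcases h.mem_of_adj_closed hclosed (Set.mem_insert b _) with h | h
    exacts [hp.ne b h, hσb h]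

end Circles

section Repair

variable {α : Type*} [DecidableEq α] {S T : Finset (Finset α)} {σ : α → α} {a b c d : α}

def repair (S : Finset (Finset α)) (a b c d : α) : Finset (Finset α) :=
  insert {b, c} (insert {a, d} ((S.erase {a, b}).erase {c, d}))

theorem mem_repair {e : Finset α} :
    e ∈ repair S a b c d ↔ e = {b, c} ∨ e = {a, d} ∨ e ≠ {c, d} ∧ e ≠ {a, b} ∧ e ∈ S := by
  simp only [repair, Finset.mem_insert, Finset.mem_erase]

theorem IsPairing.ne_of_mem_of_ne (hp : IsPairing S σ) (hab : σ a = b) (hcd : σ c = d)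
    {e : Finset α} (he : e ∈ S) (heab : e ≠ {a, b}) (hecd : e ≠ {c, d}) {x : α} (hx : x ∈ e) :
    x ≠ a ∧ x ≠ b ∧ x ≠ c ∧ x ≠ d := by
  rw [hp.eq_of_mem he hx] at heab hecd
  refine ⟨?_, ?_, ?_, ?_⟩ <;> rintro rfl
  · exact heab (by rw [hab])
  · exact heab (by rw [← hab, hp.invol, Finset.pair_comm])
  · exact hecd (by rw [hcd])
  · exact hecd (by rw [← hcd, hp.invol, Finset.pair_comm])

theorem reachable_of_mem_repair (hab : {a, b} ∈ S) (hbc : {b, c} ∈ T) (hcd : {c, d} ∈ S)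
    {e : Finset α} (he : e ∈ repair S a b c d) {x y : α} (hx : x ∈ e) (hy : y ∈ e) :
    (chordGraph (S ∪ T)).Reachable x y := by
  rcases mem_repair.mp he with rfl | rfl | ⟨-, -, he⟩
  · exact chordGraph_reachable (Finset.mem_union_right S hbc) hx hy
  · have hreach : ∀ {u v : α}, {u, v} ∈ S ∪ T → (chordGraph (S ∪ T)).Reachable u v :=
      fun h => chordGraph_reachable h (by simp) (by simp)
    have had : (chordGraph (S ∪ T)).Reachable a d :=
      (hreach (Finset.mem_union_left T hab)).trans ((hreach (Finset.mem_union_right S hbc)).trans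
        (hreach (Finset.mem_union_left T hcd)))
    simp only [Finset.mem_insert, Finset.mem_singleton] at hx hy
    rcases hx with rfl | rfl <;> rcases hy with rfl | rfl
    exacts [.rfl, had, had.symm, .rfl]
  · exact chordGraph_reachable (Finset.mem_union_left T he) hx hy

theorem IsPairing.swap_conj_apply_of_ne (hp : IsPairing S σ) (hab : σ a = b) (hcd : σ c = d)
    {x : α} (hxa : x ≠ a) (hxb : x ≠ b) (hxc : x ≠ c) (hxd : x ≠ d) :
    (Equiv.swap b d ∘ σ ∘ Equiv.swap b d) x = σ x := by
  have hσxb : σ x ≠ b := fun h => hxa (by rw [← hp.invol x, h, ← hab, hp.invol])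
  have hσxd : σ x ≠ d := fun h => hxc (by rw [← hp.invol x, h, ← hcd, hp.invol])
  simp [Equiv.swap_apply_of_ne_of_ne hxb hxd, Equiv.swap_apply_of_ne_of_ne hσxb hσxd]

theorem isPairing_repair (hp : IsPairing S σ) (hab : σ a = b) (hcd : σ c = d) (hcb : c ≠ b) :
    IsPairing (repair S a b c d) (Equiv.swap b d ∘ σ ∘ Equiv.swap b d) := by
  set π := Equiv.swap b d
  have hba : σ b = a := by rw [← hab, hp.invol]
  have hdc : σ d = c := by rw [← hcd, hp.invol]
  have hab' : a ≠ b := fun h => hp.ne a (hab.trans h.symm)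
  have hda : d ≠ a := fun h => hcb (by rw [← hdc, h, hab])
  have hcd' : c ≠ d := fun h => hp.ne c (hcd.trans h.symm)
  have hπb : π b = d := Equiv.swap_apply_left b d
  have hπd : π d = b := Equiv.swap_apply_right b d
  have hπ : ∀ x, x ≠ b → x ≠ d → π x = x := fun x => Equiv.swap_apply_of_ne_of_ne
  have hb' : (π ∘ σ ∘ π) b = c := by simp [hπb, hdc, hπ c hcb hcd']
  have hc' : (π ∘ σ ∘ π) c = b := by simp [hπ c hcb hcd', hcd, hπd]
  have ha' : (π ∘ σ ∘ π) a = d := by simp [hπ a hab' hda.symm, hab, hπb]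
  have hd' : (π ∘ σ ∘ π) d = a := by simp [hπd, hba, hπ a hab' hda.symm]
  have hx' : ∀ x, x ≠ a → x ≠ b → x ≠ c → x ≠ d → (π ∘ σ ∘ π) x = σ x :=
    fun x => hp.swap_conj_apply_of_ne hab hcd
  have hππ : ∀ x, π (π x) = x := Equiv.swap_apply_self b d
  refine ⟨fun x h => hp.ne (π x) ?_, fun x => by simp [hππ, hp.invol _], fun x => ?_,
    fun e he => ?_⟩
  · simpa [hππ] using congrArg π h
  · rw [mem_repair]
    by_cases hxa : x = a
    · rw [hxa, ha']; exact .inr (.inl rfl)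
    by_cases hxb : x = b
    · rw [hxb, hb']; exact .inl rfl
    by_cases hxc : x = c
    · rw [hxc, hc', Finset.pair_comm]; exact .inl rfl
    by_cases hxd : x = d
    · rw [hxd, hd', Finset.pair_comm]; exact .inr (.inl rfl)
    rw [hx' x hxa hxb hxc hxd]
    refine .inr (.inr ⟨?_, ?_, hp.mem x⟩) <;> rw [Ne, Finset.pair_eq_pair_iff] <;> tauto
  · rcases mem_repair.mp he with rfl | rfl | ⟨hecd, heab, heS⟩
    · exact ⟨b, by rw [hb']⟩
    · exact ⟨a, by rw [ha']⟩
    obtain ⟨x, rfl⟩ := hp.exists_eq e heS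
    obtain ⟨hxa, hxb, hxc, hxd⟩ :=
      hp.ne_of_mem_of_ne hab hcd heS heab hecd (Finset.mem_insert_self x _)
    exact ⟨x, by rw [hx' x hxa hxb hxc hxd]⟩

theorem IsPairing.card_inter_repair (hp : IsPairing S σ) (hab : σ a = b) (hcd : σ c = d)
    (hca : c ≠ a) (hcb : c ≠ b) : (S ∩ repair S a b c d).card = S.card - 2 := by
  have hda : d ≠ a := fun h => hcb (by rw [← hp.invol c, hcd, h, hab])
  have hbc : {b, c} ∉ S := fun h => hca (by rw [← (hp.pair_mem_iff hcb).mp h, ← hab, hp.invol])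
  have had : {a, d} ∉ S := fun h =>
    hca (by rw [← hp.invol c, hcd, ← (hp.pair_mem_iff hda).mp h, hp.invol])
  have hinter : S ∩ repair S a b c d = (S.erase {a, b}).erase {c, d} := by
    ext e
    rw [Finset.mem_inter, mem_repair, Finset.mem_erase, Finset.mem_erase]
    constructor
    · rintro ⟨he, rfl | rfl | h⟩
      exacts [(hbc he).elim, (had he).elim, h]
    · exact fun h => ⟨h.2.2, .inr (.inr h)⟩
  have hcd_ne : ({c, d} : Finset α) ≠ {a, b} := by
    rw [Ne, Finset.pair_eq_pair_iff]
    tauto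
  rw [hinter, Finset.card_erase_of_mem (Finset.mem_erase.mpr ⟨hcd_ne, hcd ▸ hp.mem c⟩),
    Finset.card_erase_of_mem (hab ▸ hp.mem a)]
  rfl

end Repair

attribute [local instance] LT.toSBtw

section Circle

theorem val_sub_add_val_sub {m : ℕ} [NeZero m] (u p q : ZMod m) :
    (p - q).val + (q - u).val = (p - u).val ∨ (p - q).val + (q - u).val = (p - u).val + m := by
  have hsum : p - u = (p - q) + (q - u) := by ring
  rcases lt_or_ge ((p - q).val + (q - u).val) m with h | h
  · exact .inl (by rw [hsum, ZMod.val_add_of_lt h])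
  · refine .inr ?_
    rw [hsum, ZMod.val_add_of_le h]
    have := (p - q).val_lt
    omega

theorem val_sub_ne {m : ℕ} [NeZero m] (u : ZMod m) {x y : ZMod m} (h : x ≠ y) :
    (x - u).val ≠ (y - u).val :=
  fun hxy => h (sub_left_injective (ZMod.val_injective m hxy))

theorem sbtw_swap_iff_not {i j k : ℕ} (hij : i ≠ j) (hki : k ≠ i) (hkj : k ≠ j) :
    sbtw j k i ↔ ¬ sbtw i k j := by
  simp only [sbtw_iff]
  omega

theorem xor_sbtw_iff {i j k l : ℕ} (hij : i ≠ j) (hki : k ≠ i) (hkj : k ≠ j) (hli : l ≠ i)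
    (hlj : l ≠ j) :
    Xor (sbtw i k j) (sbtw i l j) ↔ sbtw i k j ∧ sbtw j l i ∨ sbtw i l j ∧ sbtw j k i := by
  rw [xor_def, sbtw_swap_iff_not hij hki hkj, sbtw_swap_iff_not hij hli hlj]

variable {n : ℕ}

theorem not_crosses_self (e : Finset (ZMod (2 * n))) : ¬ Crosses n e e := by
  rintro ⟨a, b, -, -, rfl, -, -, -, hd, -⟩
  simp at hd

variable [NeZero (2 * n)]

/-- Positions `(x - u).val`, read clockwise from an arbitrary base point `u`, turn arcs into the
cyclic order of natural numbers. -/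
theorem strictBtw_iff_sbtw (u a b x : ZMod (2 * n)) :
    StrictBtw n a b x ↔ sbtw (a - u).val (x - u).val (b - u).val := by
  have := val_sub_add_val_sub u x a
  have := val_sub_add_val_sub u b a
  have := (x - a).val_lt
  have := (b - a).val_lt
  have := (x - u).val_lt
  have := (b - u).val_lt
  have := (a - u).val_lt
  rw [StrictBtw, sbtw_iff]
  omega

theorem crosses_pair_iff (u p q r s : ZMod (2 * n)) :
    Crosses n {p, q} {r, s} ↔
      sbtw (p - u).val (r - u).val (q - u).val ∧ sbtw (q - u).val (s - u).val (p - u).val ∨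
      sbtw (p - u).val (s - u).val (q - u).val ∧ sbtw (q - u).val (r - u).val (p - u).val := by
  constructor
  · rintro ⟨a, b, c, d, h₁, h₂, hab, hcd, hdisj, hx⟩
    have hpq : p ≠ q := by
      rcases Finset.pair_eq_pair_iff.mp h₁ with ⟨rfl, rfl⟩ | ⟨rfl, rfl⟩
      exacts [hab, hab.symm]
    have hrs : r ≠ s := by
      rcases Finset.pair_eq_pair_iff.mp h₂ with ⟨rfl, rfl⟩ | ⟨rfl, rfl⟩
      exacts [hcd, hcd.symm]
    simp only [Finset.disjoint_insert_left, Finset.disjoint_singleton_left, Finset.mem_insert,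
      Finset.mem_singleton, not_or] at hdisj
    have := val_sub_ne u hpq
    have := val_sub_ne u hrs
    have := val_sub_ne u hdisj.1.1
    have := val_sub_ne u hdisj.1.2
    have := val_sub_ne u hdisj.2.1
    have := val_sub_ne u hdisj.2.2
    rcases Finset.pair_eq_pair_iff.mp h₁ with ⟨rfl, rfl⟩ | ⟨rfl, rfl⟩ <;>
      rcases Finset.pair_eq_pair_iff.mp h₂ with ⟨rfl, rfl⟩ | ⟨rfl, rfl⟩ <;>
      change Xor _ _ at hx <;>
      rw [strictBtw_iff_sbtw u, strictBtw_iff_sbtw u,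
        xor_sbtw_iff (by omega) (by omega) (by omega) (by omega) (by omega)] at hx <;>
      tauto
  · intro h
    have ne : ∀ {x y : ZMod (2 * n)}, (x - u).val ≠ (y - u).val → x ≠ y := fun h h' => h (h' ▸ rfl)
    have hpq : p ≠ q := ne (by simp only [sbtw_iff] at h; omega)
    have hpr : p ≠ r := ne (by simp only [sbtw_iff] at h; omega)
    have hps : p ≠ s := ne (by simp only [sbtw_iff] at h; omega)
    have hqr : q ≠ r := ne (by simp only [sbtw_iff] at h; omega)
    have hqs : q ≠ s := ne (by simp only [sbtw_iff] at h; omega)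
    have hrs : r ≠ s := ne (by simp only [sbtw_iff] at h; omega)
    refine ⟨p, q, r, s, rfl, rfl, hpq, hrs, ?_, ?_⟩
    · simp only [Finset.disjoint_insert_left, Finset.disjoint_singleton_left, Finset.mem_insert,
        Finset.mem_singleton, not_or]
      exact ⟨⟨hpr, hps⟩, hqr, hqs⟩
    change Xor _ _
    rw [strictBtw_iff_sbtw u, strictBtw_iff_sbtw u, xor_sbtw_iff (val_sub_ne u hpq)
      (val_sub_ne u hpr).symm (val_sub_ne u hqr).symm (val_sub_ne u hps).symm
      (val_sub_ne u hqs).symm]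
    exact h

theorem crosses_comm (p q r s : ZMod (2 * n)) :
    Crosses n {p, q} {r, s} ↔ Crosses n {r, s} {p, q} := by
  rw [crosses_pair_iff p, crosses_pair_iff p]
  simp only [sbtw_iff]
  omega

theorem not_crosses_iff {u v x y : ZMod (2 * n)} (huv : u ≠ v) (hxu : x ≠ u) (hxv : x ≠ v)
    (hyu : y ≠ u) (hyv : y ≠ v) :
    ¬ Crosses n {u, v} {x, y} ↔ (StrictBtw n u v x ↔ StrictBtw n u v y) := by
  rw [crosses_pair_iff u, strictBtw_iff_sbtw u, strictBtw_iff_sbtw u, ← xor_sbtw_iff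
    (val_sub_ne u huv) (val_sub_ne u hxu) (val_sub_ne u hxv) (val_sub_ne u hyu) (val_sub_ne u hyv),
    xor_iff_not_iff, not_not]

theorem not_crosses_of_strictBtw_iff {u v x y : ZMod (2 * n)} (huv : u ≠ v) (hxu : x ≠ u)
    (hxv : x ≠ v) (hyu : y ≠ u) (hyv : y ≠ v)
    (h : StrictBtw n u v x ↔ StrictBtw n u v y) :
    ¬ Crosses n {u, v} {x, y} ∧ ¬ Crosses n {x, y} {u, v} :=
  have h' := (not_crosses_iff huv hxu hxv hyu hyv).mpr h
  ⟨h', fun hc => h' ((crosses_comm _ _ _ _).mp hc)⟩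

theorem strictBtw_iff_of_le (u : ZMod (2 * n)) {a b : ZMod (2 * n)} (h : (a - u).val ≤ (b - u).val)
    (x : ZMod (2 * n)) :
    StrictBtw n a b x ↔ (a - u).val < (x - u).val ∧ (x - u).val < (b - u).val := by
  rw [strictBtw_iff_sbtw u, sbtw_iff]
  omega

end Circle

section Splits

variable {n : ℕ} {S T : Finset (Finset (ZMod (2 * n)))} {σ τ : ZMod (2 * n) → ZMod (2 * n)}

theorem partners_not_strictBtw_of_arc_closed (hp : IsPairing S σ) {b c : ZMod (2 * n)}
    (hclosed : ∀ x, StrictBtw n b c x → StrictBtw n b c (σ x)) :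
    ¬ StrictBtw n b c (σ b) ∧ ¬ StrictBtw n b c (σ c) :=
  ⟨fun h => by simpa [hp.invol b, StrictBtw] using hclosed _ h,
    fun h => by simpa [hp.invol c, StrictBtw] using hclosed _ h⟩

variable [NeZero (2 * n)]

/-- Otherwise `τ x` lies in the arc too, as `T` is non-crossing, and `{x, τ x}` would be a chord
of `T` missing from `S` and shorter than `{b, τ b}`. -/
theorem strictBtw_of_shortest (hp : IsPairing S σ) (hT : IsSplit n T) (hq : IsPairing T τ)
    {b : ZMod (2 * n)} (hmin : ∀ x, {x, τ x} ∉ S → (τ b - b).val ≤ (τ x - x).val)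
    {x : ZMod (2 * n)} (hx : StrictBtw n b (τ b) x) : StrictBtw n b (τ b) (σ x) := by
  by_contra hσx
  have hxb : x ≠ b := by rintro rfl; simp [StrictBtw] at hx
  have hxc : x ≠ τ b := by rintro rfl; simp [StrictBtw] at hx
  have hτxb : τ x ≠ b := fun h => hxc (by rw [← h, hq.invol])
  have hτxc : τ x ≠ τ b := fun h => hxb (hq.invol.injective h)
  have hτx : StrictBtw n b (τ b) (τ x) :=
    ((not_crosses_iff (hq.ne b).symm hxb hxc hτxb hτxc).mp
      (hT.noncrossing _ (hq.mem b) _ (hq.mem x))).mp hx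
  have hxS : {x, τ x} ∉ S := fun h => hσx ((hp.pair_mem_iff (hq.ne x)).mp h ▸ hτx)
  have hτxS : {τ x, τ (τ x)} ∉ S := by rwa [hq.invol, Finset.pair_comm]
  have h₁ := hmin x hxS
  have h₂ := hmin (τ x) hτxS
  rw [hq.invol] at h₂
  obtain ⟨hx₁, hx₂⟩ := hx
  obtain ⟨hy₁, hy₂⟩ := hτx
  have := val_sub_ne b (hq.ne x)
  have := val_sub_add_val_sub b (τ x) x
  have := val_sub_add_val_sub b x (τ x)
  have := (τ x - x).val_lt
  have := (x - τ x).val_lt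
  omega

section ArcClosed

variable (hS : IsSplit n S) (hp : IsPairing S σ) {b c : ZMod (2 * n)} (hcb : c ≠ b)
  (hσb : σ b ≠ c) (hclosed : ∀ x, StrictBtw n b c x → StrictBtw n b c (σ x))
include hS hp hcb hσb hclosed

theorem val_sub_lt_of_arc_closed :
    0 < (c - b).val ∧ (c - b).val < (σ c - b).val ∧ (σ c - b).val < (σ b - b).val := by
  obtain ⟨hna, hnd⟩ := partners_not_strictBtw_of_arc_closed hp hclosed
  have hdb : σ c ≠ b := fun h => hσb (by rw [← h, hp.invol])
  have had : σ b ≠ σ c := fun h => hcb (hp.invol.injective h).symm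
  have hside := (not_crosses_iff (hp.ne c).symm hcb.symm hdb.symm hσb had).mp
    (hS.noncrossing _ (hp.mem c) _ (hp.mem b))
  rw [strictBtw_iff_sbtw b, strictBtw_iff_sbtw b, sbtw_iff, sbtw_iff] at hside
  have h₁ := val_sub_ne b hcb
  have h₂ := val_sub_ne b (hp.ne b)
  have h₃ := val_sub_ne b (hp.ne c)
  have h₄ := val_sub_ne b hσb
  have h₅ := val_sub_ne b hdb
  have h₆ := val_sub_ne b had
  simp only [StrictBtw, sub_self, ZMod.val_zero] at hna hnd hside h₁ h₂ h₅
  omega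

/-- Leaving this arc, the chord at `x` would enter the `σ`-closed arc from `b` to `c` or cross
`{b, σ b}` or `{c, σ c}`. -/
theorem strictBtw_of_arc_closed {x : ZMod (2 * n)} (hxa : x ≠ σ b) (hxb : x ≠ b) (hxc : x ≠ c)
    (hxd : x ≠ σ c) (hx : StrictBtw n (σ c) (σ b) x) : StrictBtw n (σ c) (σ b) (σ x) := by
  have horder := val_sub_lt_of_arc_closed hS hp hcb hσb hclosed
  have hσx : ¬ StrictBtw n b c (σ x) := fun h => by
    have h' := hclosed _ h
    rw [hp.invol] at h'
    rw [strictBtw_iff_of_le b horder.2.2.le] at hx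
    exact h'.2.not_gt (horder.2.1.trans hx.1)
  have hyc : σ x ≠ c := fun h => hxd (by rw [← h, hp.invol])
  have hyd : σ x ≠ σ c := fun h => hxc (hp.invol.injective h)
  have hcd := (not_crosses_iff (hp.ne c).symm hxc hxd hyc hyd).mp
    (hS.noncrossing _ (hp.mem c) _ (hp.mem x))
  have hba := (not_crosses_iff (hp.ne b).symm hxb hxa
    (fun h => hxa (by rw [← h, hp.invol])) (fun h => hxb (hp.invol.injective h))).mp
    (hS.noncrossing _ (hp.mem b) _ (hp.mem x))
  have h₁ := val_sub_ne b hyc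
  have h₂ := val_sub_ne b hyd
  rw [strictBtw_iff_of_le b horder.2.1.le, strictBtw_iff_of_le b horder.2.1.le] at hcd
  rw [strictBtw_iff_of_le b horder.2.2.le] at hx ⊢
  simp only [StrictBtw] at hσx hba
  omega

theorem isSplit_repair : IsSplit n (repair S (σ b) b c (σ c)) := by
  have hp' := isPairing_repair hp (hp.invol b) rfl hcb
  refine ⟨fun e he => hp'.card_eq_two he, hp'.existsUnique_mem, ?_⟩
  obtain ⟨hna, hnd⟩ := partners_not_strictBtw_of_arc_closed hp hclosed
  have hdb : σ c ≠ b := fun h => hσb (by rw [← h, hp.invol])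
  have hdc : σ c ≠ c := hp.ne c
  have had : σ b ≠ σ c := fun h => hcb (hp.invol.injective h).symm
  have hS₀ : ∀ e, e ≠ {c, σ c} → e ≠ {σ b, b} → e ∈ S →
      (¬ Crosses n {b, c} e ∧ ¬ Crosses n e {b, c}) ∧
      (¬ Crosses n {σ b, σ c} e ∧ ¬ Crosses n e {σ b, σ c}) := by
    intro e he₁ he₂ he
    obtain ⟨x, rfl⟩ := hp.exists_eq e he
    obtain ⟨hxa, hxb, hxc, hxd⟩ :=
      hp.ne_of_mem_of_ne (hp.invol b) rfl he he₂ he₁ (Finset.mem_insert_self x _)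
    obtain ⟨hya, hyb, hyc, hyd⟩ :=
      hp.ne_of_mem_of_ne (hp.invol b) rfl he he₂ he₁ (by simp : σ x ∈ ({x, σ x} : Finset _))
    rw [Finset.pair_comm (σ b)]
    refine ⟨not_crosses_of_strictBtw_iff hcb.symm hxb hxc hyb hyc
      ⟨hclosed x, fun h => by simpa [hp.invol _] using hclosed _ h⟩,
      not_crosses_of_strictBtw_iff had.symm hxd hxa hyd hya
      ⟨strictBtw_of_arc_closed hS hp hcb hσb hclosed hxa hxb hxc hxd, fun h => by
        simpa [hp.invol _] using strictBtw_of_arc_closed hS hp hcb hσb hclosed hya hyb hyc hyd h⟩⟩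
  have hnew := not_crosses_of_strictBtw_iff hcb.symm (hp.ne b) hσb hdb hdc
    (iff_of_false hna hnd)
  intro e he f hf
  rcases mem_repair.mp he with rfl | rfl | ⟨he₁, he₂, he₃⟩ <;>
    rcases mem_repair.mp hf with rfl | rfl | ⟨hf₁, hf₂, hf₃⟩
  exacts [not_crosses_self _, hnew.1, (hS₀ f hf₁ hf₂ hf₃).1.1, hnew.2, not_crosses_self _,
    (hS₀ f hf₁ hf₂ hf₃).2.1, (hS₀ e he₁ he₂ he₃).1.2, (hS₀ e he₁ he₂ he₃).2.2,
    hS.noncrossing e he₃ f hf₃]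

end ArcClosed

end Splits

section Distance

variable {n : ℕ}

theorem circleCount_eq (S T : Finset (Finset (ZMod (2 * n)))) :
    circleCount n S T = Nat.card (chordGraph (S ∪ T)).ConnectedComponent := by
  have : unionGraph n S T = chordGraph (S ∪ T) := by
    ext x y
    simp [unionGraph, chordGraph, Finset.mem_union]
  rw [circleCount, this]

theorem IsSplit.exists_isPairing {S : Finset (Finset (ZMod (2 * n)))} (hS : IsSplit n S) :
    ∃ σ, IsPairing S σ :=
  exists_isPairing_of_existsUnique hS.card_two hS.partitions

variable [NeZero (2 * n)] {S S' T : Finset (Finset (ZMod (2 * n)))}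
  {σ : ZMod (2 * n) → ZMod (2 * n)}

theorem IsPairing.card_eq (hp : IsPairing S σ) : S.card = n := by
  have := hp.two_mul_card
  rw [ZMod.card] at this
  omega

theorem circleCount_le (hS : IsSplit n S) (T : Finset (Finset (ZMod (2 * n)))) :
    circleCount n S T ≤ n := by
  obtain ⟨σ, hp⟩ := hS.exists_isPairing
  rw [circleCount_eq]
  exact (hp.card_components_le T).trans hp.card_eq.le

theorem le_circleCount_self (hT : IsSplit n T) : n ≤ circleCount n T T := by
  obtain ⟨τ, hq⟩ := hT.exists_isPairing
  rw [circleCount_eq, Finset.union_self]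
  exact hq.card_eq.ge.trans hq.card_le_card_components

theorem circleCount_le_succ_of_splitMove (hn : 2 ≤ n) (h : SplitMove n S S') (hT : IsSplit n T) :
    circleCount n S' T ≤ circleCount n S T + 1 := by
  obtain ⟨hS, -, -, hcard⟩ := h
  obtain ⟨σ, hp⟩ := hS.exists_isPairing
  obtain ⟨τ, hq⟩ := hT.exists_isPairing
  have hsdiff : (S \ S').card = 2 := by
    have := Finset.card_sdiff_add_card_inter S S'
    rw [hcard, hp.card_eq] at this
    omega
  obtain ⟨e₁, e₂, -, he⟩ := Finset.card_eq_two.mp hsdiff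
  have he₁ : e₁ ∈ S \ S' := he ▸ Finset.mem_insert_self e₁ _
  have he₂ : e₂ ∈ S \ S' := he ▸ Finset.mem_insert_of_mem (Finset.mem_singleton_self e₂)
  rw [circleCount_eq, circleCount_eq]
  refine hp.card_components_le_succ hq (Finset.mem_sdiff.mp he₁).1 (Finset.mem_sdiff.mp he₂).1
    fun e hf => ?_
  simp only [Finset.mem_erase] at hf
  by_contra hS'
  have : e ∈ S \ S' := Finset.mem_sdiff.mpr ⟨hf.2.2, hS'⟩
  simp only [he, Finset.mem_insert, Finset.mem_singleton] at this
  tauto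

theorem exists_splitMove_circleCount_lt (hS : IsSplit n S) (hT : IsSplit n T) (hST : S ≠ T) :
    ∃ S', SplitMove n S S' ∧ circleCount n S T < circleCount n S' T := by
  obtain ⟨σ, hp⟩ := hS.exists_isPairing
  obtain ⟨τ, hq⟩ := hT.exists_isPairing
  obtain ⟨b, hb, hmin⟩ := Finset.exists_min_image (Finset.univ.filter fun x => {x, τ x} ∉ S)
    (fun x => (τ x - x).val) (by simpa [Finset.Nonempty] using hp.exists_pair_notMem hq hST)
  simp only [Finset.mem_filter, Finset.mem_univ, true_and] at hb hmin
  have hσb : σ b ≠ τ b := fun h => hb (h ▸ hp.mem b)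
  have hS' := isSplit_repair hS hp (hq.ne b) hσb fun x => strictBtw_of_shortest hp hT hq hmin
  obtain ⟨σ', hp'⟩ := hS'.exists_isPairing
  have hbc : {b, τ b} ∈ repair S (σ b) b (τ b) (σ (τ b)) := mem_repair.mpr (.inl rfl)
  refine ⟨_, ⟨hS, hS', fun h => hb (h ▸ hbc), ?_⟩, ?_⟩
  · rw [hp.card_inter_repair (hp.invol b) rfl hσb.symm (hq.ne b), hp.card_eq]
  · rw [circleCount_eq, circleCount_eq]
    refine hp.card_components_lt hq hp' ((hp'.pair_mem_iff (hq.ne b)).mp hbc) hσb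
      fun e he x hx y hy => reachable_of_mem_repair ?_ (hq.mem b) (hp.mem _) he hx hy
    rw [Finset.pair_comm, ← hp.invol b]
    exact hp.mem _

theorem le_circleCount_add_of_chainLen (hn : 2 ≤ n) (hT : IsSplit n T) :
    ∀ {k S}, IsSplit n S → ChainLen (SplitMove n) k S T → n ≤ circleCount n S T + k
  | 0, _, _, rfl => le_circleCount_self hT
  | k + 1, _, _, ⟨_, hmove, h⟩ => by
    have := le_circleCount_add_of_chainLen hn hT hmove.2.1 h
    have := circleCount_le_succ_of_splitMove hn hmove hT
    omega

theorem chainLen_sub_circleCount (hn : 2 ≤ n) (hT : IsSplit n T) :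
    ∀ {k S}, IsSplit n S → n - circleCount n S T = k → ChainLen (SplitMove n) k S T
  | 0, S, hS, hk => by
    by_contra hST
    obtain ⟨S', hmove, hlt⟩ := exists_splitMove_circleCount_lt hS hT hST
    have := circleCount_le hmove.2.1 T
    omega
  | k + 1, S, hS, hk => by
    have hST : S ≠ T := by
      rintro rfl
      have := le_circleCount_self hS
      omega
    obtain ⟨S', hmove, hlt⟩ := exists_splitMove_circleCount_lt hS hT hST
    have := circleCount_le_succ_of_splitMove hn hmove hT
    exact ⟨S', hmove, chainLen_sub_circleCount hn hT hmove.2.1 (by omega)⟩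

end Distance

/-- For every `n ≥ 2` and any splits `S` and `T` of the same `2n` points, the split
distance satisfies `d(S,T) = n - ‖S,T‖`. -/
theorem splitDist_eq (n : ℕ) (hn : 2 ≤ n)
    (S T : Finset (Finset (ZMod (2 * n)))) (hS : IsSplit n S) (hT : IsSplit n T) :
    splitDist n S T = n - circleCount n S T := by
  have : NeZero (2 * n) := ⟨by omega⟩
  have hchain := chainLen_sub_circleCount hn hT hS rfl
  refine le_antisymm (Nat.sInf_le hchain) ?_
  have hmin : splitDist n S T ∈ {k | ChainLen (SplitMove n) k S T} := Nat.sInf_mem ⟨_, hchain⟩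
  have := le_circleCount_add_of_chainLen hn hT hS hmin
  omega

end MultiCrossing
end

section
/- Let T be a split of 2n points and g ∈ ZMod (2n). If f_T(g) = n, then T is the parallel split {{g+k, g−1−k} : 0 ≤ k ≤ n−1} (indices taken in ZMod (2n)); in particular the parallel split is the unique split all n of whose chords intersect D_g. Moreover, for this parallel split T one has f_T(g+j) = n − 2j for every integer j with 0 ≤ j ≤ ⌊n/2⌋. -/
attribute [local instance] Classical.propDecidable

namespace MultiCrossing

/-- `A_g = {g, g+1, …, g+n-1}`: the clockwise half-circle starting at `g`. -/
def InArc (n : ℕ) (g x : ZMod (2 * n)) : Prop := (x - g).val < n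

/-- A chord `e` intersects the diameter `D_g` if exactly one of its endpoints lies in `A_g`. -/
def HitsDiam (n : ℕ) (g : ZMod (2 * n)) (e : Finset (ZMod (2 * n))) : Prop :=
  (e.filter (fun x => InArc n g x)).card = 1

/-- `f_T(g)`: the number of chords of `T` intersecting the diameter `D_g`
(the paper's `|I(O,T)|` for the overstrand `O` in position `g`). -/
noncomputable def hitCount (n : ℕ) (T : Finset (Finset (ZMod (2 * n)))) (g : ZMod (2 * n)) : ℕ :=
  (T.filter (fun e => HitsDiam n g e)).card

/-- `cr_S(g,g')`: the number of chords of `S` intersecting both diameters `D_g` and `D_g'`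
(the paper's `|I(O,O',S)|`). -/
noncomputable def crossHitCount (n : ℕ) (S : Finset (Finset (ZMod (2 * n))))
    (g g' : ZMod (2 * n)) : ℕ :=
  (S.filter (fun e => HitsDiam n g e ∧ HitsDiam n g' e)).card

/-! If all `n` chords of a split meet `D_g`, each joins a point `g + i` of `A_g` to a point
`g + p i` outside it. Two such chords cannot cross, so `i < k` forces `p k < p i`: the map `p`
is a strictly decreasing map from `{0, …, n-1}` to `{n, …, 2n-1}`, which leaves `p i = 2n-1-i`
as the only choice. For the parallel split, the chord through `g + k` meets `D_{g+j}` exactly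
when `j ≤ k < n - j`. -/

theorem _root_.Nat.eq_sub_of_strictAntiOn_of_mapsTo {n a : ℕ} {p : ℕ → ℕ}
    (hp : StrictAntiOn p (Set.Iio n)) (hmaps : Set.MapsTo p (Set.Iio n) (Set.Ico a (a + n)))
    {i : ℕ} (hi : i < n) : p i = a + n - 1 - i := by
  have gap : ∀ {i d : ℕ}, i + d < n → p (i + d) + d ≤ p i := by
    intro i d hid
    induction d with
    | zero => simp
    | succ d ih =>
      have := hp (show i + d < n by omega) (show i + (d + 1) < n from hid) (by omega)
      have := ih (by omega)
      omega
  have hlast := gap (i := i) (d := n - 1 - i) (by omega)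
  rw [show i + (n - 1 - i) = n - 1 by omega] at hlast
  have hfirst := gap (i := 0) (d := i) (by omega)
  rw [zero_add] at hfirst
  have hlow := (hmaps (show n - 1 < n by omega)).1
  have hhigh := (hmaps (show 0 < n by omega)).2
  omega

section Positions

variable {n : ℕ} (g : ZMod (2 * n))

theorem val_add_natCast_sub_add_natCast {i j : ℕ} (hji : j ≤ i) (hi : i < 2 * n) :
    (g + i - (g + j)).val = i - j := by
  rw [show g + i - (g + j) = ((i - j : ℕ) : ZMod (2 * n)) by push_cast [Nat.cast_sub hji]; ring,
    ZMod.val_cast_of_lt (by omega)]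

theorem val_add_natCast_sub_add_natCast_of_lt {i j : ℕ} (hij : i < j) (hj : j ≤ 2 * n) :
    (g + i - (g + j)).val = 2 * n + i - j := by
  have h2n : ((2 * n : ℕ) : ZMod (2 * n)) = 0 := ZMod.natCast_self _
  rw [show g + i - (g + j) = ((2 * n + i - j : ℕ) : ZMod (2 * n)) by
      push_cast [Nat.cast_sub (show j ≤ 2 * n + i by omega)] at h2n ⊢; linear_combination -h2n,
    ZMod.val_cast_of_lt (by omega)]

theorem add_natCast_ne {i j : ℕ} (hi : i < 2 * n) (hj : j < 2 * n) (hij : i ≠ j) :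
    g + (i : ZMod (2 * n)) ≠ g + j := fun h =>
  hij (by simpa [ZMod.val_cast_of_lt hi, ZMod.val_cast_of_lt hj] using
    congrArg ZMod.val (add_left_cancel h))

theorem exists_eq_add_natCast [NeZero n] (x : ZMod (2 * n)) : ∃ i < 2 * n, x = g + i :=
  ⟨(x - g).val, ZMod.val_lt _, by simp⟩

theorem sub_one_sub_natCast {k : ℕ} (hk : k < 2 * n) :
    g - 1 - k = g + ((2 * n - 1 - k : ℕ) : ZMod (2 * n)) := by
  have h2n : ((2 * n : ℕ) : ZMod (2 * n)) = 0 := ZMod.natCast_self _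
  push_cast [Nat.cast_sub (show k ≤ 2 * n - 1 by omega), Nat.cast_sub (show 1 ≤ 2 * n by omega)]
    at h2n ⊢
  linear_combination -h2n

theorem inArc_add_natCast_iff {i : ℕ} (hi : i < 2 * n) : InArc n g (g + i) ↔ i < n := by
  simp [InArc, ZMod.val_cast_of_lt hi]

theorem crosses_add_natCast {i j k l : ℕ} (hik : i < k) (hkj : k < j) (hjl : j < l)
    (hl : l < 2 * n) : Crosses n {g + i, g + j} {g + k, g + l} := by
  have ne : ∀ {a b : ℕ}, a < b → b < 2 * n → g + (a : ZMod (2 * n)) ≠ g + b :=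
    fun hab hb => add_natCast_ne g (hab.trans hb) hb hab.ne
  refine ⟨_, _, _, _, rfl, rfl, (ne (by omega) (by omega)), ne (by omega) hl, ?_, ?_⟩
  · simp only [Finset.disjoint_insert_left, Finset.disjoint_singleton_left, Finset.mem_insert,
      Finset.mem_singleton, not_or]
    exact ⟨⟨ne hik (by omega), ne (by omega) hl⟩, (ne hkj (by omega)).symm, ne hjl hl⟩
  · left
    simp only [StrictBtw, val_add_natCast_sub_add_natCast g (le_of_lt hik) (by omega),
      val_add_natCast_sub_add_natCast g (by omega : i ≤ j) (by omega),
      val_add_natCast_sub_add_natCast g (by omega : i ≤ l) hl]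
    omega

end Positions

theorem hitsDiam_pair_iff {n : ℕ} {g x y : ZMod (2 * n)} (hxy : x ≠ y) :
    HitsDiam n g {x, y} ↔ Xor (InArc n g x) (InArc n g y) := by
  unfold HitsDiam
  rw [Finset.filter_insert, Finset.filter_singleton]
  by_cases hx : InArc n g x <;> by_cases hy : InArc n g y <;>
    simp [hx, hy, Xor, hxy, Finset.card_insert_of_notMem]

namespace IsSplit

variable {n : ℕ} {T : Finset (Finset (ZMod (2 * n)))}

theorem eq_of_mem_of_mem (hT : IsSplit n T) {e f : Finset (ZMod (2 * n))} (he : e ∈ T)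
    (hf : f ∈ T) {x : ZMod (2 * n)} (hxe : x ∈ e) (hxf : x ∈ f) : e = f :=
  (hT.partitions x).unique ⟨he, hxe⟩ ⟨hf, hxf⟩

theorem exists_pair_mem (hT : IsSplit n T) (x : ZMod (2 * n)) :
    ∃ y, x ≠ y ∧ {x, y} ∈ T := by
  obtain ⟨e, ⟨he, hxe⟩, -⟩ := hT.partitions x
  obtain ⟨u, v, huv, rfl⟩ := Finset.card_eq_two.mp (hT.card_two e he)
  rcases Finset.mem_insert.mp hxe with rfl | hxv
  · exact ⟨v, huv, he⟩
  · rw [Finset.mem_singleton.mp hxv, Finset.pair_comm] at *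
    exact ⟨u, huv.symm, he⟩

theorem card_eq [NeZero n] (hT : IsSplit n T) : T.card = n := by
  have hdeg : ∀ x, (T.filter (x ∈ ·)).card = 1 := fun x => by
    obtain ⟨e, he, huniq⟩ := hT.partitions x
    exact Finset.card_eq_one.mpr
      ⟨e, by ext f; simpa using ⟨fun hf => huniq f hf, fun h => h ▸ he⟩⟩
  have := Finset.sum_card hdeg
  rw [Finset.sum_congr rfl hT.card_two, Finset.sum_const, smul_eq_mul, ZMod.card] at this
  omega

theorem hitsDiam_of_hitCount_eq [NeZero n] (hT : IsSplit n T) {g : ZMod (2 * n)}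
    (hfull : hitCount n T g = n) {e : Finset (ZMod (2 * n))} (he : e ∈ T) : HitsDiam n g e := by
  have hall : (T.filter (HitsDiam n g ·)).card = T.card := hfull.trans hT.card_eq.symm
  exact Finset.card_filter_eq_iff.mp hall e he

theorem lt_of_nested (hT : IsSplit n T) (g : ZMod (2 * n)) {i k l m : ℕ}
    (hik : i < k) (hkl : k < l) (hkm : k < m) (hl : l < 2 * n) (hm : m < 2 * n)
    (hil_mem : {g + i, g + l} ∈ T) (hkm_mem : {g + k, g + m} ∈ T) : m < l := by
  rcases lt_trichotomy m l with hml | rfl | hlm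
  · exact hml
  · have hsame := hT.eq_of_mem_of_mem hkm_mem hil_mem
      (Finset.mem_insert_of_mem (Finset.mem_singleton_self _))
      (Finset.mem_insert_of_mem (Finset.mem_singleton_self _))
    have hk : g + (k : ZMod (2 * n)) ∈ ({g + i, g + m} : Finset _) := hsame ▸ by simp
    simp only [Finset.mem_insert, Finset.mem_singleton] at hk
    rcases hk with h | h <;> exact absurd h (add_natCast_ne g (by omega) (by omega) (by omega))
  · exact absurd (crosses_add_natCast g hik hkl hlm hm) (hT.noncrossing _ hil_mem _ hkm_mem)

theorem exists_pair_mem_of_forall_hitsDiam [NeZero n] (hT : IsSplit n T) {g : ZMod (2 * n)}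
    (hfull : ∀ e ∈ T, HitsDiam n g e) {i : ℕ} (hi : i < n) :
    ∃ l, n ≤ l ∧ l < 2 * n ∧ {g + i, g + l} ∈ T := by
  obtain ⟨y, hne, hmem⟩ := hT.exists_pair_mem (g + i)
  obtain ⟨l, hl, rfl⟩ := exists_eq_add_natCast g y
  have hits := (hitsDiam_pair_iff hne).1 (hfull _ hmem)
  rw [inArc_add_natCast_iff g (by omega), inArc_add_natCast_iff g hl] at hits
  exact ⟨l, by unfold Xor at hits; omega, hl, hmem⟩

end IsSplit

def parallelSplit (n : ℕ) (g : ZMod (2 * n)) : Finset (Finset (ZMod (2 * n))) :=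
  (Finset.range n).image fun k : ℕ => {g + (k : ZMod (2 * n)), g - 1 - (k : ZMod (2 * n))}

section Parallel

variable {n : ℕ} (g : ZMod (2 * n))

theorem parallelChord_injOn :
    Set.InjOn (fun k : ℕ => ({g + (k : ZMod (2 * n)), g - 1 - (k : ZMod (2 * n))} :
      Finset (ZMod (2 * n)))) (Set.Iio n) := by
  intro k hk k' hk' heq
  simp only [Set.mem_Iio] at hk hk' heq
  have hmem : g + (k : ZMod (2 * n)) ∈ ({g + k', g - 1 - k'} : Finset (ZMod (2 * n))) :=
    heq ▸ Finset.mem_insert_self _ _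
  rw [sub_one_sub_natCast g (by omega), Finset.mem_insert, Finset.mem_singleton] at hmem
  rcases hmem with h | h
  · exact not_not.mp fun hne => add_natCast_ne g (by omega) (by omega) hne h
  · exact absurd h (add_natCast_ne g (by omega) (by omega) (by omega))

theorem card_parallelSplit : (parallelSplit n g).card = n := by
  rw [parallelSplit, Finset.card_image_of_injOn (Finset.coe_range n ▸ parallelChord_injOn g),
    Finset.card_range]

theorem IsSplit.eq_parallelSplit [NeZero n] {T : Finset (Finset (ZMod (2 * n)))}
    (hT : IsSplit n T) (hfull : ∀ e ∈ T, HitsDiam n g e) : T = parallelSplit n g := by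
  choose! p hp using fun i (hi : i < n) => hT.exists_pair_mem_of_forall_hitsDiam hfull hi
  have hanti : StrictAntiOn p (Set.Iio n) := fun i hi k hk hik =>
    hT.lt_of_nested g hik (lt_of_lt_of_le hk (hp i hi).1) (lt_of_lt_of_le hk (hp k hk).1)
      (hp i hi).2.1 (hp k hk).2.1 (hp i hi).2.2 (hp k hk).2.2
  have hmaps : Set.MapsTo p (Set.Iio n) (Set.Ico n (n + n)) := fun i hi =>
    ⟨(hp i hi).1, by have := (hp i hi).2.1; omega⟩
  refine (Finset.eq_of_subset_of_card_le ?_ (by rw [card_parallelSplit, hT.card_eq])).symm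
  intro e he
  obtain ⟨k, hk, rfl⟩ := Finset.mem_image.mp he
  rw [Finset.mem_range] at hk
  have hchord := (hp k hk).2.2
  rwa [Nat.eq_sub_of_strictAntiOn_of_mapsTo hanti hmaps hk,
    show n + n - 1 - k = 2 * n - 1 - k by omega, ← sub_one_sub_natCast g (by omega)] at hchord

theorem hitsDiam_parallelChord_iff {j k : ℕ} (hj : j ≤ n / 2) (hk : k < n) :
    HitsDiam n (g + j) {g + (k : ZMod (2 * n)), g - 1 - (k : ZMod (2 * n))} ↔
      j ≤ k ∧ k + j < n := by
  have hne := add_natCast_ne g (by omega) (by omega) (show k ≠ 2 * n - 1 - k by omega)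
  rw [sub_one_sub_natCast g (by omega), hitsDiam_pair_iff hne, InArc, InArc,
    val_add_natCast_sub_add_natCast g (by omega : j ≤ 2 * n - 1 - k) (by omega)]
  unfold Xor
  rcases le_or_gt j k with hjk | hkj
  · rw [val_add_natCast_sub_add_natCast g hjk (by omega)]
    omega
  · rw [val_add_natCast_sub_add_natCast_of_lt g hkj (by omega)]
    omega

theorem hitCount_parallelSplit {j : ℕ} (hj : j ≤ n / 2) :
    hitCount n (parallelSplit n g) (g + j) = n - 2 * j := by
  rw [hitCount, parallelSplit, Finset.filter_image, Finset.card_image_of_injOn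
    ((parallelChord_injOn g).mono fun k hk => Finset.mem_range.mp (Finset.mem_filter.mp hk).1),
    Finset.filter_congr fun k hk => hitsDiam_parallelChord_iff g hj (Finset.mem_range.mp hk),
    show (Finset.range n).filter (fun k => j ≤ k ∧ k + j < n) = Finset.Ico j (n - j) by
      ext k; simp only [Finset.mem_filter, Finset.mem_range, Finset.mem_Ico]; omega,
    Nat.card_Ico]
  omega

end Parallel

/-- If `f_T(g) = n`, then `T` is the parallel split `{{g+k, g-1-k} : 0 ≤ k ≤ n-1}`; in
particular the parallel split is the unique split all `n` of whose chords intersect `D_g`.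
Moreover, for this parallel split `T` one has `f_T(g+j) = n - 2j` for all `0 ≤ j ≤ ⌊n/2⌋`. -/
theorem hitCount_eq_n_iff_parallel (n : ℕ) (hn : 1 ≤ n)
    (T : Finset (Finset (ZMod (2 * n)))) (hT : IsSplit n T) (g : ZMod (2 * n))
    (hfull : hitCount n T g = n) :
    T = (Finset.range n).image
        (fun k : ℕ => ({g + (k : ZMod (2 * n)), g - 1 - (k : ZMod (2 * n))} :
          Finset (ZMod (2 * n)))) ∧
    (∀ j : ℕ, j ≤ n / 2 → hitCount n T (g + (j : ZMod (2 * n))) = n - 2 * j) := by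
  have : NeZero n := ⟨by omega⟩
  have hpar : T = parallelSplit n g :=
    hT.eq_parallelSplit g fun _ he => hT.hitsDiam_of_hitCount_eq hfull he
  exact ⟨hpar, fun j hj => hpar ▸ hitCount_parallelSplit g hj⟩

end MultiCrossing
end
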